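/- arXiv:1203.2704 — 2 statements merged into one kernel-verified Lean document; each statement's English description precedes it below -/
import Mathlib

section
/- Given a valid build, its access sequence produces the same final shared state as the sequential execution of the tasks in any topological order of the dependency graph. -/
/-- A deterministic task program: a sequence of reads and writes on resources,
where each subsequent access may depend on the values previously read. -/
inductive Prog (R V : Type) where
  | done : Prog R V
  | read (r : R) (k : V → Prog R V) : Prog R V
  | write (r : R) (v : V) (k : Prog R V) : Prog R V

/-- A single recorded access: task `task` reads (`isWrite = false`) or writes
(`isWrite = true`) the value `val` of resource `res`. -/
structure Access (T R V : Type) where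
  task : T
  res : R
  isWrite : Bool
  val : V

/-- Execute a schedule (a list of task names; at each step the named task
performs its next access, if any).  Returns the remaining programs, the final
shared state, and the access sequence (trace) of the build. -/
def exec {T R V : Type} [DecidableEq T] [DecidableEq R]
    (progs : T → Prog R V) (s : R → V) :
    List T → (T → Prog R V) × (R → V) × List (Access T R V)
  | [] => (progs, s, [])
  | t :: ts =>
    match progs t with
    | .done => exec progs s ts
    | .read r k =>
        let res := exec (Function.update progs t (k (s r))) s ts
        (res.1, res.2.1, ⟨t, r, false, s r⟩ :: res.2.2)
    | .write r v k =>
        let res := exec (Function.update progs t k) (Function.update s r v) ts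
        (res.1, res.2.1, ⟨t, r, true, v⟩ :: res.2.2)

/-- The schedule completes the build: afterwards every task is done. -/
def Completes {T R V : Type} [DecidableEq T] [DecidableEq R]
    (progs : T → Prog R V) (s : R → V) (sched : List T) : Prop :=
  (exec progs s sched).1 = fun _ => Prog.done

/-- The access sequence (trace) of a build. -/
def trace {T R V : Type} [DecidableEq T] [DecidableEq R]
    (progs : T → Prog R V) (s : R → V) (sched : List T) : List (Access T R V) :=
  (exec progs s sched).2.2

/-- The final shared state of a build. -/
def finalState {T R V : Type} [DecidableEq T] [DecidableEq R]
    (progs : T → Prog R V) (s : R → V) (sched : List T) : R → V :=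
  (exec progs s sched).2.1

/-- All accesses of `f` precede all accesses of `g` in the trace `tr`. -/
def AllBefore {T R V : Type} (tr : List (Access T R V)) (f g : T) : Prop :=
  ∀ (i j : ℕ) (hi : i < tr.length) (hj : j < tr.length),
    (tr.get ⟨i, hi⟩).task = f → (tr.get ⟨j, hj⟩).task = g → i < j

/-- The trace respects the dependency DAG `D`: if `g` depends (directly or
transitively) on `f`, all accesses of `f` precede all accesses of `g`. -/
def RespectsDAG {T R V : Type} (D : T → T → Prop) (tr : List (Access T R V)) : Prop :=
  ∀ f g, Relation.TransGen D f g → AllBefore tr f g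

/-- Tasks `t₁`, `t₂` conflict during the trace `tr`: one of them writes a
resource the other reads or writes. -/
def Conflict {T R V : Type} (tr : List (Access T R V)) (t₁ t₂ : T) : Prop :=
  t₁ ≠ t₂ ∧ ∃ a ∈ tr, ∃ b ∈ tr, a.task = t₁ ∧ b.task = t₂ ∧ a.res = b.res ∧
    (a.isWrite = true ∨ b.isWrite = true)

/-- The build is valid: every conflicting pair of tasks is connected by a
directed path in the dependency graph `D`. -/
def ValidTrace {T R V : Type} (D : T → T → Prop) (tr : List (Access T R V)) : Prop :=
  ∀ t₁ t₂, Conflict tr t₁ t₂ →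
    Relation.TransGen D t₁ t₂ ∨ Relation.TransGen D t₂ t₁

/-- A build from the configuration `(D, progs, s₀)`: a schedule that completes
all tasks and whose trace respects the dependency DAG `D`. -/
def IsBuild {T R V : Type} [DecidableEq T] [DecidableEq R]
    (D : T → T → Prop) (progs : T → Prog R V) (s₀ : R → V) (sched : List T) : Prop :=
  Completes progs s₀ sched ∧ RespectsDAG D (trace progs s₀ sched)

/-- `l` is a topological ordering of `D` on the tasks. -/
def IsTopoOrdering {T : Type} (D : T → T → Prop) (l : List T) : Prop :=
  l.Nodup ∧ (∀ t : T, t ∈ l) ∧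
    ∀ (i j : ℕ) (hi : i < l.length) (hj : j < l.length),
      D (l.get ⟨i, hi⟩) (l.get ⟨j, hj⟩) → i < j

/-!
Induction on the length of the valid build. Let `t` be the unfinished task that comes first in
the topological order. Its next access does not conflict with the next access of any other task
scheduled before it, so it commutes to the front of the build without changing the outcome; the
remaining accesses form a sublist of the old trace, hence again a valid build. The sequential
schedule also begins, up to finished tasks, with that same access of `t`, and the induction
hypothesis applies to the configuration after it.
-/

abbrev Config (T R V : Type) := (T → Prog R V) × (R → V)

def Config.run {T R V : Type} [DecidableEq T] [DecidableEq R]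
    (c : Config T R V) (sched : List T) : Config T R V :=
  ((exec c.1 c.2 sched).1, (exec c.1 c.2 sched).2.1)

def Prog.nextAccess {R V : Type} : Prog R V → Option (R × Bool)
  | .done => none
  | .read r _ => some (r, false)
  | .write r _ _ => some (r, true)

def Prog.Independent {R V : Type} (p q : Prog R V) : Prop :=
  ¬ ∃ r w₁ w₂, p.nextAccess = some (r, w₁) ∧ q.nextAccess = some (r, w₂) ∧
    (w₁ = true ∨ w₂ = true)

lemma Prog.Independent.symm {R V : Type} {p q : Prog R V} (h : p.Independent q) :
    q.Independent p :=
  fun ⟨r, w₁, w₂, hq, hp, hw⟩ => h ⟨r, w₂, w₁, hp, hq, hw.symm⟩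

lemma Prog.Independent.res_ne {R V : Type} {p q : Prog R V} (h : p.Independent q) {r₁ r₂ : R}
    {w₁ w₂ : Bool} (hp : p.nextAccess = some (r₁, w₁)) (hq : q.nextAccess = some (r₂, w₂))
    (hw : w₁ = true ∨ w₂ = true) : r₁ ≠ r₂ := by
  rintro rfl
  exact h ⟨r₁, w₁, w₂, hp, hq, hw⟩

section Exec
variable {T R V : Type} [DecidableEq T] [DecidableEq R]

lemma Config.run_cons (c : Config T R V) (t : T) (ts : List T) :
    c.run (t :: ts) = (c.run [t]).run ts := by
  cases h : c.1 t <;> simp [Config.run, exec, h]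

lemma trace_cons (c : Config T R V) (t : T) (ts : List T) :
    trace c.1 c.2 (t :: ts) = trace c.1 c.2 [t] ++ trace (c.run [t]).1 (c.run [t]).2 ts := by
  cases h : c.1 t <;> simp [trace, Config.run, exec, h]

lemma completes_iff_run_fst (c : Config T R V) (sched : List T) :
    Completes c.1 c.2 sched ↔ (c.run sched).1 = fun _ => .done := Iff.rfl

lemma Config.run_singleton_of_done (c : Config T R V) {a : T} (h : c.1 a = .done) :
    c.run [a] = c := by
  simp [Config.run, exec, h]

lemma Config.run_singleton_fst_of_ne (c : Config T R V) {a u : T} (h : a ≠ u) :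
    (c.run [a]).1 u = c.1 u := by
  cases ha : c.1 a <;> simp [Config.run, exec, ha, Function.update_of_ne h.symm]

lemma Config.run_fst_of_not_mem (c : Config T R V) {u : T} {sched : List T} (h : u ∉ sched) :
    (c.run sched).1 u = c.1 u := by
  induction sched generalizing c with
  | nil => rfl
  | cons a ts ih =>
    rw [List.mem_cons, not_or] at h
    rw [Config.run_cons, ih _ h.2, Config.run_singleton_fst_of_ne c (Ne.symm h.1)]

lemma Config.run_singleton_fst_eq_done (c : Config T R V) {a u : T} (h : c.1 u = .done) :
    (c.run [a]).1 u = .done := by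
  by_cases hau : a = u
  · subst hau; simp [Config.run, exec, h]
  · rw [c.run_singleton_fst_of_ne hau, h]

lemma Config.run_fst_eq_done (c : Config T R V) {u : T} (sched : List T) (h : c.1 u = .done) :
    (c.run sched).1 u = .done := by
  induction sched generalizing c with
  | nil => exact h
  | cons a ts ih => rw [Config.run_cons]; exact ih _ (c.run_singleton_fst_eq_done h)

lemma Config.run_of_forall_done (c : Config T R V) (h : ∀ u, c.1 u = .done) (sched : List T) :
    c.run sched = c := by
  induction sched with
  | nil => rfl
  | cons a ts ih => rw [Config.run_cons, c.run_singleton_of_done (h a), ih]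

lemma mem_of_completes {c : Config T R V} {sched : List T} {t : T}
    (hc : Completes c.1 c.2 sched) (ht : c.1 t ≠ .done) : t ∈ sched := by
  by_contra h
  exact ht ((c.run_fst_of_not_mem h).symm.trans (congrFun hc t))

lemma trace_singleton_of_nextAccess (c : Config T R V) {t : T} {r : R} {w : Bool}
    (h : (c.1 t).nextAccess = some (r, w)) : ∃ v, trace c.1 c.2 [t] = [⟨t, r, w, v⟩] := by
  cases ht : c.1 t <;> simp_all [Prog.nextAccess, trace, exec]

lemma exists_mem_trace_of_nextAccess {c : Config T R V} {sched : List T} {t : T} {r : R}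
    {w : Bool} (hc : Completes c.1 c.2 sched) (h : (c.1 t).nextAccess = some (r, w)) :
    ∃ A ∈ trace c.1 c.2 sched, A.task = t ∧ A.res = r ∧ A.isWrite = w := by
  induction sched generalizing c with
  | nil =>
    have : c.1 t = .done := congrFun hc t
    simp [this, Prog.nextAccess] at h
  | cons a ts ih =>
    rw [trace_cons]
    by_cases hat : a = t
    · subst hat
      obtain ⟨v, hv⟩ := trace_singleton_of_nextAccess c h
      exact ⟨⟨a, r, w, v⟩, by simp [hv], rfl, rfl, rfl⟩
    · obtain ⟨A, hA, hAt⟩ := ih (c := c.run [a])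
        (by rwa [completes_iff_run_fst, ← Config.run_cons]) (by rwa [c.run_singleton_fst_of_ne hat])
      exact ⟨A, List.mem_append_right _ hA, hAt⟩

lemma Config.run_pair_comm (c : Config T R V) {t a : T} (hta : t ≠ a)
    (h : (c.1 t).Independent (c.1 a)) : c.run [t, a] = c.run [a, t] := by
  cases ht : c.1 t <;> cases ha : c.1 a <;>
    simp [Config.run, exec, ht, ha, Function.update_of_ne hta,
      Function.update_of_ne hta.symm, Function.update_comm hta] <;>
  · have hne := h.res_ne (by rw [ht]; rfl) (by rw [ha]; rfl) (by simp)
    simp [Function.update_of_ne hne, Function.update_of_ne hne.symm, Function.update_comm hne]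

lemma trace_run_singleton_of_independent (c : Config T R V) {t a : T} (hta : t ≠ a)
    (h : (c.1 t).Independent (c.1 a)) :
    trace (c.run [a]).1 (c.run [a]).2 [t] = trace c.1 c.2 [t] := by
  cases ht : c.1 t <;> cases ha : c.1 a <;>
    simp [Config.run, trace, exec, ht, ha, Function.update_of_ne hta]
  exact Function.update_of_ne (h.res_ne (by rw [ht]; rfl) (by rw [ha]; rfl) (by simp)) _ _

end Exec

section Dag
variable {T R V : Type}

lemma AllBefore.sublist {tr tr' : List (Access T R V)} (h : tr'.Sublist tr) {f g : T}
    (hfg : AllBefore tr f g) : AllBefore tr' f g := by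
  obtain ⟨e, he⟩ := List.sublist_iff_exists_fin_orderEmbedding_get_eq.mp h
  intro i j hi hj hf hg
  have hlt := hfg (e ⟨i, hi⟩) (e ⟨j, hj⟩) (e ⟨i, hi⟩).2 (e ⟨j, hj⟩).2
    (by rw [Fin.eta, ← he]; exact hf) (by rw [Fin.eta, ← he]; exact hg)
  exact e.strictMono.lt_iff_lt.mp (Fin.lt_def.mpr hlt)

lemma RespectsDAG.sublist {D : T → T → Prop} {tr tr' : List (Access T R V)} (h : tr'.Sublist tr)
    (hr : RespectsDAG D tr) : RespectsDAG D tr' :=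
  fun f g hfg => (hr f g hfg).sublist h

lemma ValidTrace.sublist {D : T → T → Prop} {tr tr' : List (Access T R V)} (h : tr'.Sublist tr)
    (hv : ValidTrace D tr) : ValidTrace D tr' := by
  rintro t₁ t₂ ⟨hne, a, ha, b, hb, hconf⟩
  exact hv t₁ t₂ ⟨hne, a, h.mem ha, b, h.mem hb, hconf⟩

lemma not_allBefore_cons {A B : Access T R V} {tr : List (Access T R V)} {f g : T}
    (hA : A.task = g) (hB : B ∈ tr) (hBf : B.task = f) : ¬ AllBefore (A :: tr) f g := by
  intro h
  obtain ⟨⟨j, hj⟩, rfl⟩ := List.mem_iff_get.mp hB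
  have := h (j + 1) 0 (by simpa using hj) (by simp) (by simpa using hBf) hA
  omega

lemma IsTopoOrdering.idxOf_lt_of_transGen [DecidableEq T] {D : T → T → Prop} {l : List T}
    (hl : IsTopoOrdering D l) {a b : T} (h : Relation.TransGen D a b) :
    l.idxOf a < l.idxOf b := by
  obtain ⟨-, hmem, htopo⟩ := hl
  have hD : ∀ x y, D x y → l.idxOf x < l.idxOf y := fun x y hxy =>
    htopo _ _ (List.idxOf_lt_length_iff.mpr (hmem x)) (List.idxOf_lt_length_iff.mpr (hmem y))
      (by rwa [List.idxOf_get, List.idxOf_get])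
  induction h with
  | single h => exact hD _ _ h
  | tail _ h ih => exact ih.trans (hD _ _ h)

def IsEarliestPending [DecidableEq T] (l : List T) (progs : T → Prog R V) (t : T) : Prop :=
  progs t ≠ .done ∧ ∀ u, progs u ≠ .done → l.idxOf t ≤ l.idxOf u

lemma exists_isEarliestPending [DecidableEq T] (l : List T) {progs : T → Prog R V}
    (h : ∃ u, progs u ≠ .done) : ∃ t, IsEarliestPending l progs t := by
  obtain ⟨t, ht, hmin⟩ := (measure l.idxOf).wf.has_min {u | progs u ≠ .done} h
  exact ⟨t, ht, fun u hu => not_lt.mp (hmin u hu)⟩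

end Dag

section Schedule
variable {T R V : Type} [DecidableEq T] [DecidableEq R]

lemma IsEarliestPending.run_singleton {l : List T} {c : Config T R V} {t a : T}
    (ht : IsEarliestPending l c.1 t) (hat : a ≠ t) : IsEarliestPending l (c.run [a]).1 t := by
  refine ⟨by rw [c.run_singleton_fst_of_ne hat]; exact ht.1, fun u hu => ht.2 u fun h => hu ?_⟩
  exact c.run_fst_eq_done [a] h

/-- A path `a → t` in `D` would put `a` before `t` in `l`, and a path `t → a` would force all
accesses of `t` before the first access of `a`. -/
lemma IsEarliestPending.independent {D : T → T → Prop} {l : List T} (hl : IsTopoOrdering D l)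
    {c : Config T R V} {t a : T} {rest : List T} (ht : IsEarliestPending l c.1 t) (hat : a ≠ t)
    (hc : Completes c.1 c.2 (a :: rest)) (hr : RespectsDAG D (trace c.1 c.2 (a :: rest)))
    (hv : ValidTrace D (trace c.1 c.2 (a :: rest))) : (c.1 t).Independent (c.1 a) := by
  rintro ⟨r, w₁, w₂, htn, han, hw⟩
  obtain ⟨v, hA⟩ := trace_singleton_of_nextAccess c han
  obtain ⟨B, hB, hBt, hBr, hBw⟩ := exists_mem_trace_of_nextAccess (c := c.run [a])
    (sched := rest) (by rwa [completes_iff_run_fst, ← Config.run_cons])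
    (by rwa [c.run_singleton_fst_of_ne hat])
  have htrace : trace c.1 c.2 (a :: rest) =
      ⟨a, r, w₂, v⟩ :: trace (c.run [a]).1 (c.run [a]).2 rest := by
    rw [trace_cons, hA]; rfl
  have hconf : Conflict (trace c.1 c.2 (a :: rest)) a t := by
    rw [htrace]
    exact ⟨hat, _, List.mem_cons_self, B, List.mem_cons_of_mem _ hB, rfl, hBt, hBr.symm, by
      rw [hBw]; exact hw.symm⟩
  rcases hv a t hconf with hpath | hpath
  · have ha : c.1 a ≠ .done := fun h => by simp [h, Prog.nextAccess] at han
    exact absurd (hl.idxOf_lt_of_transGen hpath) (not_lt.mpr (ht.2 a ha))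
  · rw [htrace] at hr
    exact not_allBefore_cons rfl hB hBt (hr t a hpath)

lemma exists_run_cons_of_valid {D : T → T → Prop} {l : List T} (hl : IsTopoOrdering D l)
    {c : Config T R V} {sched : List T} {t : T} (ht : IsEarliestPending l c.1 t)
    (hc : Completes c.1 c.2 sched) (hr : RespectsDAG D (trace c.1 c.2 sched))
    (hv : ValidTrace D (trace c.1 c.2 sched)) :
    ∃ sched', sched'.length < sched.length ∧ (c.run [t]).run sched' = c.run sched ∧
      (trace (c.run [t]).1 (c.run [t]).2 sched').Sublist (trace c.1 c.2 sched) := by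
  induction sched generalizing c with
  | nil => exact absurd (congrFun hc t) ht.1
  | cons a rest ih =>
    by_cases hat : a = t
    · subst hat
      exact ⟨rest, by simp, (c.run_cons a rest).symm, by
        rw [trace_cons]; exact List.sublist_append_right _ _⟩
    have hind := ht.independent hl hat hc hr hv
    have hsub :
        (trace (c.run [a]).1 (c.run [a]).2 rest).Sublist (trace c.1 c.2 (a :: rest)) := by
      rw [trace_cons]; exact List.sublist_append_right _ _
    obtain ⟨sched', hlen, hrun, hsub'⟩ := ih (c := c.run [a]) (ht.run_singleton hat)
      (by rwa [completes_iff_run_fst, ← Config.run_cons]) (hr.sublist hsub) (hv.sublist hsub)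
    have hswap : (c.run [t]).run [a] = (c.run [a]).run [t] := by
      rw [← Config.run_cons, ← Config.run_cons, c.run_pair_comm (Ne.symm hat) hind]
    refine ⟨a :: sched', by simpa using hlen, ?_, ?_⟩
    · rw [Config.run_cons, hswap, hrun, ← Config.run_cons]
    · rw [trace_cons, trace_cons c a rest, hswap,
        trace_run_singleton_of_independent c hat hind.symm]
      exact hsub'.append_left _

lemma exists_run_cons_of_sorted {l : List T} (hl : ∀ u, u ∈ l) {c : Config T R V}
    {sched : List T} {t : T} (ht : IsEarliestPending l c.1 t) (hc : Completes c.1 c.2 sched)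
    (hs : sched.Pairwise fun a b => l.idxOf a ≤ l.idxOf b) :
    ∃ sched', (c.run [t]).run sched' = c.run sched ∧
      sched'.Pairwise fun a b => l.idxOf a ≤ l.idxOf b := by
  induction sched with
  | nil => exact absurd (congrFun hc t) ht.1
  | cons a rest ih =>
    by_cases ha : c.1 a = .done
    · have hskip : c.run (a :: rest) = c.run rest := by
        rw [Config.run_cons, c.run_singleton_of_done ha]
      obtain ⟨sched', hrun, hs'⟩ := ih (by rwa [completes_iff_run_fst, ← hskip]) hs.of_cons
      exact ⟨sched', hrun.trans hskip.symm, hs'⟩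
    have hat : a = t := by
      rcases List.mem_cons.mp (mem_of_completes hc ht.1) with h | h
      · exact h.symm
      · exact (List.idxOf_inj (hl a)).mp
          (le_antisymm (List.rel_of_pairwise_cons hs h) (ht.2 a ha))
    subst hat
    exact ⟨rest, (c.run_cons a rest).symm, hs.of_cons⟩

end Schedule

theorem valid_build_eq_sequential_general {T R V : Type} [DecidableEq T] [DecidableEq R]
    (D : T → T → Prop) (progs : T → Prog R V) (s₀ : R → V)
    (sched₁ sched₂ : List T)
    (h₁ : IsBuild D progs s₀ sched₁)
    (hvalid : ValidTrace D (trace progs s₀ sched₁))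
    (l : List T) (hl : IsTopoOrdering D l)
    (hseq : sched₂.Pairwise fun a b => l.idxOf a ≤ l.idxOf b)
    (h₂ : Completes progs s₀ sched₂) :
    finalState progs s₀ sched₁ = finalState progs s₀ sched₂ := by
  obtain ⟨hc₁, hr₁⟩ := h₁
  induction hn : sched₁.length using Nat.strong_induction_on
    generalizing progs s₀ sched₁ sched₂ with
  | _ n ih =>
  let c : Config T R V := (progs, s₀)
  change (c.run sched₁).2 = (c.run sched₂).2
  by_cases hdone : ∀ u, progs u = .done
  · rw [c.run_of_forall_done hdone, c.run_of_forall_done hdone]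
  obtain ⟨t, ht⟩ := exists_isEarliestPending l (not_forall.mp hdone)
  obtain ⟨sched₁', hlen, hrun₁, hsub⟩ := exists_run_cons_of_valid (c := c) hl ht hc₁ hr₁ hvalid
  obtain ⟨sched₂', hrun₂, hseq'⟩ := exists_run_cons_of_sorted (c := c) hl.2.1 ht h₂ hseq
  rw [← hrun₁, ← hrun₂]
  exact ih _ (hn ▸ hlen) _ _ sched₁' sched₂' (hvalid.sublist hsub) hseq'
    (by rwa [completes_iff_run_fst, hrun₂]) (by rwa [completes_iff_run_fst, hrun₁])
    (hr₁.sublist hsub) rfl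

/-- A valid build produces the same final shared state as the sequential
execution of the tasks in any topological order of the dependency graph:
if `sched₁` is a valid build, and `sched₂` is a completing schedule that runs
each task to completion in the order given by a topological ordering `l`
(i.e. `sched₂` is sorted by position in `l`), then both produce the same
final state. -/
theorem valid_build_eq_sequential {T R V : Type} [DecidableEq T] [DecidableEq R]
    [Fintype T] (D : T → T → Prop) (progs : T → Prog R V) (s₀ : R → V)
    (sched₁ sched₂ : List T)
    (h₁ : IsBuild D progs s₀ sched₁)
    (hvalid : ValidTrace D (trace progs s₀ sched₁))
    (l : List T) (hl : IsTopoOrdering D l)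
    (hseq : sched₂.Pairwise fun a b => l.idxOf a ≤ l.idxOf b)
    (h₂ : Completes progs s₀ sched₂) :
    finalState progs s₀ sched₁ = finalState progs s₀ sched₂ :=
  valid_build_eq_sequential_general D progs s₀ sched₁ sched₂ h₁ hvalid l hl hseq h₂
end

section
/- In a valid build, the final value of each resource equals the value written by the last task (in any topological order consistent with the DAG) that writes that resource, or the initial value if no task writes it. -/
/-! Executing a schedule changes the shared state only at writes, so the final value of `r` is
the value of the last write to `r` in the trace, or `s₀ r` if there is none. If `t` writes `r` and
every other writer of `r` is a DAG-predecessor of `t`, then all accesses of those writers precede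
all accesses of `t`, in particular `t`'s own write to `r`; hence the last write to `r` is `t`'s. -/

namespace List

variable {α : Type*}

theorem exists_eq_append_cons_of_getLast?_filter_eq_some {p : α → Bool} {l : List α} {a : α}
    (h : (l.filter p).getLast? = some a) :
    ∃ l₁ l₂, l = l₁ ++ a :: l₂ ∧ p a ∧ ∀ x ∈ l₂, ¬ p x := by
  obtain ⟨ys, hys⟩ := getLast?_eq_some_iff.mp h
  obtain ⟨m₁, m₂, rfl, -, hm₂⟩ := filter_eq_append_iff.mp hys
  obtain ⟨k₁, k₂, rfl, -, hpa, hk₂⟩ := filter_eq_cons_iff.mp hm₂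
  exact ⟨m₁ ++ k₁, k₂, by simp, hpa, filter_eq_nil_iff.mp hk₂⟩

theorem getLast?_filter_append_cons {p : α → Bool} {l₁ l₂ : List α} {a : α} (ha : p a)
    (h₂ : ∀ x ∈ l₂, ¬ p x) : ((l₁ ++ a :: l₂).filter p).getLast? = some a := by
  simp [filter_append, ha, filter_eq_nil_iff.mpr h₂]

end List

section Build

variable {T R V : Type}

theorem AllBefore.mem_of_eq_append_cons {tr l₁ l₂ : List (Access T R V)} {a c : Access T R V}
    {g : T} (h : AllBefore tr a.task g) (htr : tr = l₁ ++ a :: l₂) (hc : c ∈ tr)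
    (hcg : c.task = g) : c ∈ l₂ := by
  subst htr
  obtain ⟨i, hi, rfl⟩ := List.getElem_of_mem hc
  have hlt : l₁.length < i := h l₁.length i (by simp) hi (by simp) hcg
  obtain ⟨j, rfl⟩ := Nat.exists_eq_add_of_lt hlt
  rw [List.getElem_append_right (by omega)]
  simp only [show l₁.length + j + 1 - l₁.length = j + 1 by omega, List.getElem_cons_succ]
  exact List.getElem_mem _

variable [DecidableEq T] [DecidableEq R]

theorem finalState_apply (progs : T → Prog R V) (s : R → V) (sched : List T) (r : R) :
    finalState progs s sched r =
      ((((trace progs s sched).filter fun a => a.res = r ∧ a.isWrite = true).getLast?).map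
        Access.val).getD (s r) := by
  unfold finalState trace
  induction sched generalizing progs s with
  | nil => rfl
  | cons t ts ih =>
    rw [exec]
    split
    · exact ih _ _
    · simpa using ih _ _
    · next r' v k _ =>
      by_cases hr : r' = r
      · subst hr
        rw [List.filter_cons_of_pos (by simp), List.getLast?_cons, Option.map_some,
          Option.getD_some, ih, Function.update_self]
        exact Option.getD_map Access.val ⟨t, r', true, v⟩ _
      · simp [hr, ih, Function.update_of_ne (Ne.symm hr)]

end Build

theorem valid_build_last_writer_general {T R V : Type} [DecidableEq T] [DecidableEq R]
    (D : T → T → Prop) (progs : T → Prog R V) (s₀ : R → V)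
    (sched : List T) (hb : IsBuild D progs s₀ sched) (r : R) :
    -- if no task writes `r`, the final value is the initial value
    ((∀ a ∈ trace progs s₀ sched, ¬ (a.res = r ∧ a.isWrite = true)) →
      finalState progs s₀ sched r = s₀ r) ∧
    -- if `t` writes `r` and every other writer of `r` precedes `t` in the DAG,
    -- then the final value of `r` is the value of `t`'s last write to `r`
    (∀ t : T, (∃ a ∈ trace progs s₀ sched, a.task = t ∧ a.res = r ∧ a.isWrite = true) →
      (∀ t', t' ≠ t →
          (∃ a ∈ trace progs s₀ sched, a.task = t' ∧ a.res = r ∧ a.isWrite = true) →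
          Relation.TransGen D t' t) →
      ∀ a, ((trace progs s₀ sched).filter
              (fun a => a.task = t ∧ a.res = r ∧ a.isWrite = true)).getLast? = some a →
        finalState progs s₀ sched r = a.val) := by
  set tr := trace progs s₀ sched
  refine ⟨fun hnone => ?_, fun t ⟨c, hc, hct, hcr, hcw⟩ hdag a ha => ?_⟩
  · rw [finalState_apply, List.filter_eq_nil_iff.mpr (by simpa using hnone)]
    rfl
  obtain ⟨w, hw⟩ : ∃ w, (tr.filter fun a => a.res = r ∧ a.isWrite = true).getLast? = some w :=
    ⟨_, List.getLast?_eq_some_getLast (List.ne_nil_of_mem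
      (List.mem_filter.mpr ⟨hc, by simp [hcr, hcw]⟩))⟩
  obtain ⟨l₁, l₂, htr, hwr, hlast⟩ := List.exists_eq_append_cons_of_getLast?_filter_eq_some hw
  have hwt : w.task = t := by
    by_contra hne
    have hwc : AllBefore tr w.task t :=
      hb.2 _ _ (hdag w.task hne ⟨w, by simp [htr], rfl, by simpa using hwr⟩)
    exact hlast c (hwc.mem_of_eq_append_cons htr hc hct) (by simp [hcr, hcw])
  rw [htr, List.getLast?_filter_append_cons (by simpa [hwt] using hwr)
    (fun x hx hq => hlast x hx (by simp only [decide_eq_true_eq] at hq ⊢; exact hq.2))] at ha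
  rw [finalState_apply, hw, ← Option.some_inj.mp ha]
  rfl

/-- In a valid build, the final value of each resource equals the value written
by the DAG-last task writing that resource (its last write in the trace), or
the initial value if no task writes it.  "DAG-last" means every other writer of
`r` has a directed path to `t`; in a valid build this is equivalent to being
last in any topological order consistent with the DAG. -/
theorem valid_build_last_writer {T R V : Type} [DecidableEq T] [DecidableEq R]
    [Fintype T] (D : T → T → Prop) (progs : T → Prog R V) (s₀ : R → V)
    (sched : List T) (hb : IsBuild D progs s₀ sched)
    (hvalid : ValidTrace D (trace progs s₀ sched)) (r : R) :
    -- if no task writes `r`, the final value is the initial value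
    ((∀ a ∈ trace progs s₀ sched, ¬ (a.res = r ∧ a.isWrite = true)) →
      finalState progs s₀ sched r = s₀ r) ∧
    -- if `t` writes `r` and every other writer of `r` precedes `t` in the DAG,
    -- then the final value of `r` is the value of `t`'s last write to `r`
    (∀ t : T, (∃ a ∈ trace progs s₀ sched, a.task = t ∧ a.res = r ∧ a.isWrite = true) →
      (∀ t', t' ≠ t →
          (∃ a ∈ trace progs s₀ sched, a.task = t' ∧ a.res = r ∧ a.isWrite = true) →
          Relation.TransGen D t' t) →
      ∀ a, ((trace progs s₀ sched).filter
              (fun a => a.task = t ∧ a.res = r ∧ a.isWrite = true)).getLast? = some a →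
        finalState progs s₀ sched r = a.val) :=
  valid_build_last_writer_general D progs s₀ sched hb r
end
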